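/- Let R be a real (or complex) m × 3 matrix and let u₁² ≥ u₂² ≥ u₃² be the eigenvalues of R†R. Then for all unit vectors B, B' ∈ ℝᵐ (resp. the complex unit sphere), unit vectors a, a' ∈ ℝ³, the quantity ⟨B, R(a + a')⟩ + ⟨B', R(a − a')⟩ is at most 2√(u₁² + u₂²). -/

import Mathlib

/-!
With `x = a + a'` and `y = a - a'` we have `x ⬝ᵥ y = 0` and `|x|² + |y|² = 4`, and for a unit
vector `B` the pairing `⟨B, Rx⟩` is at most `|Rx|`. Expanding in the eigenbasis of `RᵀR`,
`|y|² |Rx|² + |x|² |Ry|² = ∑ uᵢ tᵢ` with `tᵢ = |y|² ⟨x, eᵢ⟩² + |x|² ⟨y, eᵢ⟩²`; Bessel's inequality for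
the orthogonal pair `x, y` gives `0 ≤ tᵢ ≤ |x|² |y|²`, Parseval gives `∑ tᵢ = 2 |x|² |y|²`, so the sum
is at most `(u₀ + u₁) |x|² |y|²` (Ky Fan for two vectors). Cauchy–Schwarz in the weights
`|x|, |y|` then yields `|Rx| + |Ry| ≤ √(|x|² + |y|²) √(u₀ + u₁) = 2 √(u₀ + u₁)`.
-/

open Matrix

section DotProduct

variable {ι κ : Type*} [Fintype ι] [Fintype κ]

theorem dotProduct_self_nonneg (v : ι → ℝ) : 0 ≤ v ⬝ᵥ v :=
  Finset.sum_nonneg fun i _ => mul_self_nonneg (v i)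

theorem dotProduct_le_sqrt_of_dotProduct_self_eq_one {b : ι → ℝ} (hb : b ⬝ᵥ b = 1) (w : ι → ℝ) :
    b ⬝ᵥ w ≤ √(w ⬝ᵥ w) := by
  have hcs : (b ⬝ᵥ w) ^ 2 ≤ (b ⬝ᵥ b) * (w ⬝ᵥ w) := by
    simpa [dotProduct, sq] using Finset.sum_mul_sq_le_sq_mul_sq Finset.univ b w
  rw [hb, one_mul] at hcs
  exact (le_abs_self _).trans (Real.abs_le_sqrt hcs)

theorem mulVec_dotProduct_mulVec_self (R : Matrix κ ι ℝ) (v : ι → ℝ) :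
    R *ᵥ v ⬝ᵥ R *ᵥ v = v ⬝ᵥ (Rᵀ * R) *ᵥ v := by
  rw [← mulVec_mulVec, dotProduct_mulVec v Rᵀ, vecMul_transpose]

theorem dotProduct_sq_add_dotProduct_sq_le_of_orthogonal {x y : ι → ℝ} (hxy : x ⬝ᵥ y = 0)
    (v : ι → ℝ) :
    (y ⬝ᵥ y) * (x ⬝ᵥ v) ^ 2 + (x ⬝ᵥ x) * (y ⬝ᵥ v) ^ 2 ≤ (x ⬝ᵥ x) * (y ⬝ᵥ y) * (v ⬝ᵥ v) := by
  rcases eq_or_ne x 0 with rfl | hx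
  · simp
  rcases eq_or_ne y 0 with rfl | hy
  · simp
  have hp : 0 < x ⬝ᵥ x := lt_of_le_of_ne (dotProduct_self_nonneg x) (by simpa [eq_comm] using hx)
  have hq : 0 < y ⬝ᵥ y := lt_of_le_of_ne (dotProduct_self_nonneg y) (by simpa [eq_comm] using hy)
  set p := x ⬝ᵥ x
  set q := y ⬝ᵥ y
  set c := x ⬝ᵥ v
  set d := y ⬝ᵥ v
  -- `p * q` times the squared length of the residual of `v` after projecting onto `x` and `y`
  have hres : 0 ≤ (p * q) * (p * q * (v ⬝ᵥ v) - (q * c ^ 2 + p * d ^ 2)) := by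
    convert dotProduct_self_nonneg ((p * q) • v - (q * c) • x - (p * d) • y) using 1
    simp only [dotProduct_sub, sub_dotProduct, dotProduct_smul, smul_dotProduct, smul_eq_mul,
      dotProduct_comm v x, dotProduct_comm v y, dotProduct_comm y x, hxy]
    ring
  nlinarith [mul_pos hp hq]

end DotProduct

theorem sum_mul_le_of_antitone {n : ℕ} {u t : Fin (n + 2) → ℝ} (hu : Antitone u) {T : ℝ}
    (ht : ∀ i, 0 ≤ t i) (htT : ∀ i, t i ≤ T) (hsum : ∑ i, t i = 2 * T) :
    ∑ i, u i * t i ≤ (u 0 + u 1) * T := by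
  have htail : ∑ i : Fin (n + 1), u i.succ * t i.succ ≤ u 1 * ∑ i : Fin (n + 1), t i.succ := by
    rw [Finset.mul_sum]
    gcongr with i
    · exact ht _
    · exact hu (Fin.succ_zero_eq_one (n := n) ▸ Fin.succ_le_succ_iff.mpr (Fin.zero_le i))
  rw [Fin.sum_univ_succ] at hsum ⊢
  rw [show ∑ i : Fin (n + 1), t i.succ = 2 * T - t 0 by linarith] at htail
  nlinarith [mul_nonneg (sub_nonneg.2 (hu (Fin.zero_le (1 : Fin (n + 2)))))
    (sub_nonneg.2 (htT 0))]

theorem sqrt_add_sqrt_le_sqrt_add_mul {p q X Y K : ℝ} (hp : 0 ≤ p) (hq : 0 ≤ q) (hX : 0 ≤ X)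
    (hY : 0 ≤ Y) (hXp : X ≤ p * K) (hYq : Y ≤ q * K) (hw : q * X + p * Y ≤ p * q * K) :
    √X + √Y ≤ √((p + q) * K) := by
  apply Real.le_sqrt_of_sq_le
  have hsX := Real.sq_sqrt hX
  have hsY := Real.sq_sqrt hY
  rcases hp.eq_or_lt with rfl | hp
  · rw [show X = 0 by linarith, Real.sqrt_zero]
    linarith
  rcases hq.eq_or_lt with rfl | hq
  · rw [show Y = 0 by linarith, Real.sqrt_zero]
    linarith
  -- Cauchy–Schwarz: `(√X + √Y)² ≤ (p + q) (X / p + Y / q)`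
  have hcs : p * q * (√X + √Y) ^ 2 ≤ (p + q) * (q * X + p * Y) := by
    have hsq : (p + q) * (q * X + p * Y) - p * q * (√X + √Y) ^ 2 = (q * √X - p * √Y) ^ 2 := by
      linear_combination (-(q ^ 2 + p * q)) * hsX - (p ^ 2 + p * q) * hsY
    nlinarith [sq_nonneg (q * √X - p * √Y)]
  refine le_of_mul_le_mul_left ?_ (mul_pos hp hq)
  calc p * q * (√X + √Y) ^ 2 ≤ (p + q) * (q * X + p * Y) := hcs
    _ ≤ (p + q) * (p * q * K) := by gcongr
    _ = p * q * ((p + q) * K) := by ring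

section Eigenbasis

variable {ι κ : Type*} [Fintype ι] [Fintype κ] [DecidableEq ι] {e : ι → ι → ℝ}

theorem sum_dotProduct_mul_dotProduct_of_orthonormal
    (horth : ∀ i j, e i ⬝ᵥ e j = if i = j then (1 : ℝ) else 0) (v w : ι → ℝ) :
    ∑ i, (v ⬝ᵥ e i) * (w ⬝ᵥ e i) = v ⬝ᵥ w := by
  have hE : of e * (of e)ᵀ = 1 := by
    ext i j
    simpa [mul_apply, one_apply, dotProduct] using horth i j
  calc ∑ i, (v ⬝ᵥ e i) * (w ⬝ᵥ e i) = of e *ᵥ v ⬝ᵥ of e *ᵥ w := by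
        simp only [dotProduct, mulVec, of_apply, mul_comm]
    _ = v ⬝ᵥ ((of e)ᵀ * of e) *ᵥ w := by
        rw [← mulVec_mulVec, dotProduct_mulVec v (of e)ᵀ, vecMul_transpose]
    _ = v ⬝ᵥ w := by rw [mul_eq_one_comm.mp hE, one_mulVec]

variable {R : Matrix κ ι ℝ} {u : ι → ℝ}

theorem eigenvalue_nonneg_of_transpose_mul_self
    (horth : ∀ i j, e i ⬝ᵥ e j = if i = j then (1 : ℝ) else 0)
    (heig : ∀ i, (Rᵀ * R) *ᵥ e i = u i • e i) (i : ι) : 0 ≤ u i := by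
  have h := mulVec_dotProduct_mulVec_self R (e i)
  rw [heig, dotProduct_smul, horth, if_pos rfl, smul_eq_mul, mul_one] at h
  exact h ▸ dotProduct_self_nonneg _

theorem mulVec_dotProduct_mulVec_eq_sum
    (horth : ∀ i j, e i ⬝ᵥ e j = if i = j then (1 : ℝ) else 0)
    (heig : ∀ i, (Rᵀ * R) *ᵥ e i = u i • e i) (v : ι → ℝ) :
    R *ᵥ v ⬝ᵥ R *ᵥ v = ∑ i, u i * (v ⬝ᵥ e i) ^ 2 := by
  rw [mulVec_dotProduct_mulVec_self, ← sum_dotProduct_mul_dotProduct_of_orthonormal horth]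
  refine Finset.sum_congr rfl fun i _ => ?_
  have hsymm : (Rᵀ * R) *ᵥ v ⬝ᵥ e i = v ⬝ᵥ (Rᵀ * R) *ᵥ e i := by
    rw [dotProduct_mulVec, ← vecMul_transpose, transpose_mul, transpose_transpose]
  rw [hsymm, heig, dotProduct_smul, smul_eq_mul]
  ring

theorem mulVec_dotProduct_mulVec_le_of_eigenvalue_le
    (horth : ∀ i j, e i ⬝ᵥ e j = if i = j then (1 : ℝ) else 0)
    (heig : ∀ i, (Rᵀ * R) *ᵥ e i = u i • e i) {c : ℝ} (hc : ∀ i, u i ≤ c) (v : ι → ℝ) :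
    R *ᵥ v ⬝ᵥ R *ᵥ v ≤ c * (v ⬝ᵥ v) := by
  rw [mulVec_dotProduct_mulVec_eq_sum horth heig,
    ← sum_dotProduct_mul_dotProduct_of_orthonormal horth v v, Finset.mul_sum]
  refine Finset.sum_le_sum fun i _ => ?_
  rw [← sq]
  exact mul_le_mul_of_nonneg_right (hc i) (sq_nonneg _)

end Eigenbasis

section TopTwoEigenvalues

variable {κ : Type*} [Fintype κ] {n : ℕ} {R : Matrix κ (Fin (n + 2)) ℝ} {u : Fin (n + 2) → ℝ}
  {e : Fin (n + 2) → Fin (n + 2) → ℝ}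

theorem weighted_mulVec_dotProduct_mulVec_le_of_orthogonal
    (horth : ∀ i j, e i ⬝ᵥ e j = if i = j then (1 : ℝ) else 0)
    (heig : ∀ i, (Rᵀ * R) *ᵥ e i = u i • e i) (hu : Antitone u) {x y : Fin (n + 2) → ℝ}
    (hxy : x ⬝ᵥ y = 0) :
    (y ⬝ᵥ y) * (R *ᵥ x ⬝ᵥ R *ᵥ x) + (x ⬝ᵥ x) * (R *ᵥ y ⬝ᵥ R *ᵥ y) ≤
      (x ⬝ᵥ x) * (y ⬝ᵥ y) * (u 0 + u 1) := by
  have hparseval (v : Fin (n + 2) → ℝ) : ∑ i, (v ⬝ᵥ e i) ^ 2 = v ⬝ᵥ v := by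
    simpa only [sq] using sum_dotProduct_mul_dotProduct_of_orthonormal horth v v
  rw [mulVec_dotProduct_mulVec_eq_sum horth heig, mulVec_dotProduct_mulVec_eq_sum horth heig,
    Finset.mul_sum, Finset.mul_sum, ← Finset.sum_add_distrib]
  calc _ = ∑ i, u i * ((y ⬝ᵥ y) * (x ⬝ᵥ e i) ^ 2 + (x ⬝ᵥ x) * (y ⬝ᵥ e i) ^ 2) :=
        Finset.sum_congr rfl fun i _ => by ring
    _ ≤ _ := by
      rw [mul_comm]
      refine sum_mul_le_of_antitone hu (fun i => add_nonneg
        (mul_nonneg (dotProduct_self_nonneg y) (sq_nonneg _))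
        (mul_nonneg (dotProduct_self_nonneg x) (sq_nonneg _))) (fun i => ?_) ?_
      · simpa [horth] using dotProduct_sq_add_dotProduct_sq_le_of_orthogonal hxy (e i)
      · rw [Finset.sum_add_distrib, ← Finset.mul_sum, ← Finset.mul_sum, hparseval, hparseval]
        ring

theorem sqrt_add_sqrt_le_of_orthogonal
    (horth : ∀ i j, e i ⬝ᵥ e j = if i = j then (1 : ℝ) else 0)
    (heig : ∀ i, (Rᵀ * R) *ᵥ e i = u i • e i) (hu : Antitone u) {x y : Fin (n + 2) → ℝ}
    (hxy : x ⬝ᵥ y = 0) :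
    √(R *ᵥ x ⬝ᵥ R *ᵥ x) + √(R *ᵥ y ⬝ᵥ R *ᵥ y) ≤ √((x ⬝ᵥ x + y ⬝ᵥ y) * (u 0 + u 1)) := by
  have hu1 := eigenvalue_nonneg_of_transpose_mul_self horth heig 1
  have hbound (v : Fin (n + 2) → ℝ) : R *ᵥ v ⬝ᵥ R *ᵥ v ≤ (v ⬝ᵥ v) * (u 0 + u 1) := by
    rw [mul_comm]
    exact mulVec_dotProduct_mulVec_le_of_eigenvalue_le horth heig
      (fun i => by linarith [hu (Fin.zero_le i)]) v
  exact sqrt_add_sqrt_le_sqrt_add_mul (dotProduct_self_nonneg x) (dotProduct_self_nonneg y)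
    (dotProduct_self_nonneg _) (dotProduct_self_nonneg _) (hbound x) (hbound y)
    (weighted_mulVec_dotProduct_mulVec_le_of_orthogonal horth heig hu hxy)

end TopTwoEigenvalues

theorem stmt_2 {m : ℕ} (R : Matrix (Fin m) (Fin 3) ℝ) (u : Fin 3 → ℝ)
    (e : Fin 3 → Fin 3 → ℝ)
    (horth : ∀ i j, e i ⬝ᵥ e j = if i = j then (1 : ℝ) else 0)
    (heig : ∀ i, (Rᵀ * R).mulVec (e i) = u i • e i)
    (hu01 : u 1 ≤ u 0) (hu12 : u 2 ≤ u 1)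
    (B B' : Fin m → ℝ) (hB : B ⬝ᵥ B = 1) (hB' : B' ⬝ᵥ B' = 1)
    (a a' : Fin 3 → ℝ) (ha : a ⬝ᵥ a = 1) (ha' : a' ⬝ᵥ a' = 1) :
    B ⬝ᵥ R.mulVec (a + a') + B' ⬝ᵥ R.mulVec (a - a') ≤
      2 * Real.sqrt (u 0 + u 1) := by
  have hu : Antitone u := Fin.antitone_iff_succ_le.2 fun i => by fin_cases i <;> assumption
  have hsymm := dotProduct_comm a' a
  have horthogonal : (a + a') ⬝ᵥ (a - a') = 0 := by
    simp only [add_dotProduct, dotProduct_sub, ha, ha', hsymm]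
    ring
  have hnorm : (a + a') ⬝ᵥ (a + a') + (a - a') ⬝ᵥ (a - a') = 2 ^ 2 := by
    simp only [add_dotProduct, dotProduct_add, sub_dotProduct, dotProduct_sub, ha, ha', hsymm]
    ring
  calc B ⬝ᵥ R *ᵥ (a + a') + B' ⬝ᵥ R *ᵥ (a - a')
      ≤ √(R *ᵥ (a + a') ⬝ᵥ R *ᵥ (a + a')) + √(R *ᵥ (a - a') ⬝ᵥ R *ᵥ (a - a')) :=
        add_le_add (dotProduct_le_sqrt_of_dotProduct_self_eq_one hB _)
          (dotProduct_le_sqrt_of_dotProduct_self_eq_one hB' _)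
    _ ≤ √(2 ^ 2 * (u 0 + u 1)) :=
        hnorm ▸ sqrt_add_sqrt_le_of_orthogonal (n := 1) horth heig hu horthogonal
    _ = 2 * √(u 0 + u 1) := by rw [Real.sqrt_mul (by positivity), Real.sqrt_sq zero_le_two]
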